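/- Let L be a reduced 1-compact compactly generated multiplicative lattice such that the set of compact elements is multiplicatively closed and Clique(Γᵐ(L)) < ∞. Then 0 is the meet of a finite number of minimal prime elements of L. -/

import Mathlib

variable {α : Type*}

/-- Iterated product `a^n` in a multiplicative lattice (with `a^0 = ⊤`). -/
def mpow [CompleteLattice α] (mul : α → α → α) (a : α) : ℕ → α
  | 0 => ⊤
  | n + 1 => mul a (mpow mul a n)

/-- `mul` makes the complete lattice `α` into a multiplicative lattice. -/
def IsMulLattice [CompleteLattice α] (mul : α → α → α) : Prop :=
  (∀ a b : α, mul a b = mul b a) ∧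
  (∀ a b c : α, mul (mul a b) c = mul a (mul b c)) ∧
  (∀ (a : α) (s : Set α), mul a (sSup s) = ⨆ b ∈ s, mul a b) ∧
  (∀ a b : α, mul a b ≤ a ⊓ b) ∧
  (∀ a : α, mul a ⊤ = a)

/-- The multiplicative lattice is reduced: the only nilpotent element is `⊥`. -/
def LatReduced [CompleteLattice α] (mul : α → α → α) : Prop :=
  ∀ (a : α) (n : ℕ), mpow mul a (n + 1) = ⊥ → a = ⊥

/-- `a* = sup {x | x·a = 0}`. -/
def starAnn [CompleteLattice α] (mul : α → α → α) (a : α) : α :=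
  sSup {x : α | mul x a = ⊥}

/-- A prime element of a multiplicative lattice. -/
def IsPrimeElt [CompleteLattice α] (mul : α → α → α) (p : α) : Prop :=
  p ≠ ⊤ ∧ ∀ a b : α, mul a b ≤ p → a ≤ p ∨ b ≤ p

/-- The zero-divisor graph `Γᵐ(L)` of a multiplicative lattice. -/
def zdg [CompleteLattice α] (mul : α → α → α) : SimpleGraph α where
  Adj a b := a ≠ b ∧ a ≠ ⊥ ∧ b ≠ ⊥ ∧ mul a b = ⊥ ∧ mul b a = ⊥
  symm := ⟨fun a b h => ⟨h.1.symm, h.2.2.1, h.2.1, h.2.2.2.2, h.2.2.2.1⟩⟩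
  loopless := ⟨fun a h => h.1 rfl⟩

/-- `Clique(Γᵐ(L)) < ∞`. -/
def CliqueBounded [CompleteLattice α] (mul : α → α → α) : Prop :=
  ∃ N : ℕ, ∀ s : Finset α, (zdg mul).IsClique ↑s → s.card ≤ N

/-!
Two distinct minimal primes `p ≠ q` are separated by elements `x ≰ p`, `y ≰ q` with `x·y = 0`:
for compact `a ≤ q` with `a ≰ p`, minimality of `q` forces some `b ≰ q` with `a·b = 0`, since
otherwise reducedness keeps the products `s·aⁿ` (`s ≰ q` compact) away from `0`, and a prime
avoiding them would lie below `q`, hence equal `q`, yet not contain `s·a ≤ a`. Multiplying such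
separators over all other members of a family of `k` minimal primes gives `k` nonzero elements
with pairwise zero products, a clique of size `k` in `Γᵐ(L)`; so there are finitely many minimal
primes. Their meet is `0`: the powers of a nonzero compact `c` are nonzero, so a prime, and then a
minimal prime below it, avoids `c`.
-/

theorem exists_isCompactElement_le_not_le [CompleteLattice α] [IsCompactlyGenerated α]
    {a b : α} (h : ¬ a ≤ b) : ∃ c, IsCompactElement c ∧ c ≤ a ∧ ¬ c ≤ b := by
  simpa [le_iff_compact_le_imp (a := a)] using h

section Prime

variable [CompleteLattice α] {mul : α → α → α}

theorem isPrimeElt_sInf_of_isChain {C : Set α} (hC : IsChain (· ≤ ·) C) (hne : C.Nonempty)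
    (hCp : ∀ p ∈ C, IsPrimeElt mul p) : IsPrimeElt mul (sInf C) := by
  obtain ⟨p₀, hp₀⟩ := hne
  refine ⟨fun htop => (hCp p₀ hp₀).1 (top_le_iff.1 (htop ▸ sInf_le hp₀)), fun u v huv => ?_⟩
  by_contra! h
  obtain ⟨p, hp, hup⟩ := not_forall₂.1 (mt le_sInf_iff.2 h.1)
  obtain ⟨r, hr, hvr⟩ := not_forall₂.1 (mt le_sInf_iff.2 h.2)
  rcases hC.total hp hr with hpr | hrp
  · exact ((hCp p hp).2 u v (huv.trans (sInf_le hp))).elim hup fun hv => hvr (hv.trans hpr)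
  · exact ((hCp r hr).2 u v (huv.trans (sInf_le hr))).elim (fun hu => hup (hu.trans hrp)) hvr

theorem exists_minimal_isPrimeElt_le {p : α} (hp : IsPrimeElt mul p) :
    ∃ q ≤ p, Minimal (IsPrimeElt mul) q := by
  have hchain : ∀ C ⊆ {x : αᵒᵈ | IsPrimeElt mul (OrderDual.ofDual x)}, IsChain (· ≤ ·) C →
      ∀ r ∈ C, ∃ ub ∈ {x : αᵒᵈ | IsPrimeElt mul (OrderDual.ofDual x)}, ∀ z ∈ C, z ≤ ub :=
    fun C hCp hC r hr => ⟨OrderDual.toDual (sInf (OrderDual.toDual ⁻¹' C)),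
      isPrimeElt_sInf_of_isChain hC.symm ⟨r, hr⟩ fun _ hx => hCp hx, fun _ hz => sInf_le hz⟩
  obtain ⟨q, hqp, hq⟩ := zorn_le_nonempty₀ _ hchain (OrderDual.toDual p) hp
  exact ⟨OrderDual.ofDual q, hqp, hq⟩

end Prime

namespace IsMulLattice

variable [CompleteLattice α] {mul : α → α → α} (hL : IsMulLattice mul)
include hL

theorem mul_comm (a b : α) : mul a b = mul b a := hL.1 a b

theorem mul_assoc (a b c : α) : mul (mul a b) c = mul a (mul b c) := hL.2.1 a b c

theorem mul_le_left (a b : α) : mul a b ≤ a := (hL.2.2.2.1 a b).trans inf_le_left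

theorem mul_le_right (a b : α) : mul a b ≤ b := (hL.2.2.2.1 a b).trans inf_le_right

theorem mul_top (a : α) : mul a ⊤ = a := hL.2.2.2.2 a

theorem top_mul (a : α) : mul ⊤ a = a := (hL.mul_comm ⊤ a).trans (hL.mul_top a)

theorem mul_sup (a b c : α) : mul a (b ⊔ c) = mul a b ⊔ mul a c := by
  rw [← sSup_pair, hL.2.2.1, iSup_pair]

theorem sup_mul (a b c : α) : mul (a ⊔ b) c = mul a c ⊔ mul b c := by
  rw [hL.mul_comm, hL.mul_sup, hL.mul_comm c, hL.mul_comm c]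

theorem mul_le_mul_left (a : α) {b c : α} (h : b ≤ c) : mul a b ≤ mul a c :=
  le_sup_left.trans_eq (by rw [← hL.mul_sup, sup_eq_right.2 h])

theorem mul_le_mul {a b c d : α} (hac : a ≤ c) (hbd : b ≤ d) : mul a b ≤ mul c d :=
  calc mul a b ≤ mul a d := hL.mul_le_mul_left a hbd
    _ = mul d a := hL.mul_comm a d
    _ ≤ mul d c := hL.mul_le_mul_left d hac
    _ = mul c d := hL.mul_comm d c

theorem mul_mul_mul_comm (a b c d : α) :
    mul (mul a b) (mul c d) = mul (mul a c) (mul b d) := by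
  rw [hL.mul_assoc, hL.mul_assoc, ← hL.mul_assoc b, hL.mul_comm b c, hL.mul_assoc c]

theorem mpow_one (a : α) : mpow mul a 1 = a := hL.mul_top a

theorem mpow_add (a : α) (m n : ℕ) :
    mul (mpow mul a m) (mpow mul a n) = mpow mul a (m + n) := by
  induction m with
  | zero => exact (hL.top_mul _).trans (by rw [Nat.zero_add])
  | succ m ih =>
    rw [Nat.add_right_comm]
    exact (hL.mul_assoc _ _ _).trans (congrArg (mul a) ih)

theorem mpow_mul_le (s a : α) (n : ℕ) :
    mpow mul (mul s a) (n + 1) ≤ mul s (mpow mul a (n + 1)) := by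
  induction n with
  | zero => rw [hL.mpow_one, hL.mpow_one]
  | succ n ih =>
    calc mul (mul s a) (mpow mul (mul s a) (n + 1))
        ≤ mul (mul s a) (mpow mul a (n + 1)) :=
          hL.mul_le_mul_left _ (ih.trans (hL.mul_le_right _ _))
      _ = mul s (mpow mul a (n + 2)) := hL.mul_assoc _ _ _

theorem isCompactElement_mpow_succ
    (hmc : ∀ a b : α, IsCompactElement a → IsCompactElement b → IsCompactElement (mul a b))
    {a : α} (ha : IsCompactElement a) (n : ℕ) : IsCompactElement (mpow mul a (n + 1)) := by
  induction n with
  | zero => rwa [hL.mpow_one]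
  | succ n ih => exact hmc a _ ha ih

theorem eq_bot_of_mul_self_eq_bot (hred : LatReduced mul) {a : α} (h : mul a a = ⊥) : a = ⊥ :=
  hred a 1 (by rwa [show mpow mul a 2 = mul a a from congrArg (mul a) (hL.mpow_one a)])

theorem isPrimeElt_of_maximal_forall_not_le {M : Set α} (hMne : M.Nonempty)
    (hMmul : ∀ m ∈ M, ∀ n ∈ M, ∃ r ∈ M, r ≤ mul m n) {q : α}
    (hq : Maximal (fun x => ∀ m ∈ M, ¬ m ≤ x) q) : IsPrimeElt mul q := by
  obtain ⟨m₀, hm₀⟩ := hMne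
  refine ⟨fun htop => hq.prop m₀ hm₀ (htop ▸ le_top), fun u v huv => ?_⟩
  by_contra! h
  have above : ∀ w, ¬ w ≤ q → ∃ m ∈ M, m ≤ q ⊔ w := fun w hw => by
    by_contra! hM
    exact hw (le_sup_right.trans (hq.2 hM le_sup_left))
  obtain ⟨m, hm, hmu⟩ := above u h.1
  obtain ⟨n, hn, hnv⟩ := above v h.2
  obtain ⟨r, hr, hrmn⟩ := hMmul m hm n hn
  have hprod : mul (q ⊔ u) (q ⊔ v) ≤ q := by
    rw [hL.sup_mul, hL.mul_sup, hL.mul_sup]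
    exact sup_le (sup_le (hL.mul_le_left _ _) (hL.mul_le_left _ _))
      (sup_le (hL.mul_le_right _ _) huv)
  exact hq.prop r hr (hrmn.trans ((hL.mul_le_mul hmu hnv).trans hprod))

theorem exists_isPrimeElt_forall_not_le {M : Set α} (hMne : M.Nonempty)
    (hMc : ∀ m ∈ M, IsCompactElement m) (hMmul : ∀ m ∈ M, ∀ n ∈ M, ∃ r ∈ M, r ≤ mul m n)
    (hM : ⊥ ∉ M) : ∃ p, IsPrimeElt mul p ∧ ∀ m ∈ M, ¬ m ≤ p := by
  obtain ⟨q, hq⟩ := zorn_le₀ {x : α | ∀ m ∈ M, ¬ m ≤ x} fun C hC hchain => by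
    rcases C.eq_empty_or_nonempty with rfl | hCne
    · exact ⟨⊥, fun m hm hm0 => hM (le_bot_iff.1 hm0 ▸ hm), by simp⟩
    refine ⟨sSup C, fun m hm hmC => ?_, fun _ hz => le_sSup hz⟩
    obtain ⟨x, hxC, hmx⟩ := (CompleteLattice.isCompactElement_iff_le_of_directed_sSup_le α m).1
      (hMc m hm) C hCne hchain.directedOn hmC
    exact hC hxC m hm hmx
  exact ⟨q, hL.isPrimeElt_of_maximal_forall_not_le hMne hMmul hq, hq.prop⟩

theorem exists_minimal_isPrimeElt_not_le (hred : LatReduced mul)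
    (hmc : ∀ a b : α, IsCompactElement a → IsCompactElement b → IsCompactElement (mul a b))
    {c : α} (hc : IsCompactElement c) (hc0 : c ≠ ⊥) :
    ∃ q, Minimal (IsPrimeElt mul) q ∧ ¬ c ≤ q := by
  obtain ⟨p, hp, hpM⟩ := hL.exists_isPrimeElt_forall_not_le
    (M := Set.range fun n => mpow mul c (n + 1)) ⟨_, 0, rfl⟩
    (by rintro _ ⟨n, rfl⟩; exact hL.isCompactElement_mpow_succ hmc hc n)
    (by
      rintro _ ⟨m, rfl⟩ _ ⟨n, rfl⟩
      exact ⟨_, ⟨m + 1 + n, rfl⟩, (hL.mpow_add c (m + 1) (n + 1)).ge⟩)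
    (fun ⟨n, hn⟩ => hc0 (hred c n hn))
  obtain ⟨q, hqp, hq⟩ := exists_minimal_isPrimeElt_le hp
  exact ⟨q, hq, fun hcq => hpM _ ⟨0, rfl⟩ ((hL.mpow_one c).trans_le (hcq.trans hqp))⟩

theorem exists_not_le_mul_eq_bot_of_minimal [IsCompactlyGenerated α] (hred : LatReduced mul)
    (hmc : ∀ a b : α, IsCompactElement a → IsCompactElement b → IsCompactElement (mul a b))
    {p a : α} (hp : Minimal (IsPrimeElt mul) p) (ha : IsCompactElement a) (hap : a ≤ p) :
    ∃ b, ¬ b ≤ p ∧ mul a b = ⊥ := by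
  by_contra! hann
  obtain ⟨s₀, hs₀, -, hs₀p⟩ :=
    exists_isCompactElement_le_not_le fun h => hp.prop.1 (top_le_iff.1 h)
  obtain ⟨q, hq, hqM⟩ := hL.exists_isPrimeElt_forall_not_le
    (M := {m | ∃ s, IsCompactElement s ∧ ¬ s ≤ p ∧ ∃ n, m = mul s (mpow mul a (n + 1))})
    ⟨_, s₀, hs₀, hs₀p, 0, rfl⟩
    (by
      rintro _ ⟨s, hs, -, n, rfl⟩
      exact hmc s _ hs (hL.isCompactElement_mpow_succ hmc ha n))
    (by
      rintro _ ⟨s, hs, hsp, m, rfl⟩ _ ⟨t, ht, htp, n, rfl⟩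
      refine ⟨_, ⟨mul s t, hmc s t hs ht, fun h => (hp.prop.2 s t h).elim hsp htp,
        m + 1 + n, rfl⟩, ?_⟩
      rw [hL.mul_mul_mul_comm, hL.mpow_add]; rfl)
    (by
      rintro ⟨s, -, hsp, n, hn⟩
      have hsa : mul s a = ⊥ := hred _ n (le_bot_iff.1 (hn ▸ hL.mpow_mul_le s a n))
      exact hann s hsp ((hL.mul_comm a s).trans hsa))
  have hqp : q ≤ p := by
    by_contra hqp
    obtain ⟨s, hs, hsq, hsp⟩ := exists_isCompactElement_le_not_le hqp
    exact hqM _ ⟨s, hs, hsp, 0, rfl⟩ ((hL.mul_le_left _ _).trans hsq)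
  rw [hp.eq_of_le hq hqp] at hqM
  exact hqM _ ⟨s₀, hs₀, hs₀p, 0, rfl⟩ ((hL.mul_le_right _ _).trans (by rwa [hL.mpow_one]))

theorem exists_not_le_not_le_mul_eq_bot [IsCompactlyGenerated α] (hred : LatReduced mul)
    (hmc : ∀ a b : α, IsCompactElement a → IsCompactElement b → IsCompactElement (mul a b))
    {p q : α} (hp : Minimal (IsPrimeElt mul) p) (hq : Minimal (IsPrimeElt mul) q) (hpq : p ≠ q) :
    ∃ x y, ¬ x ≤ p ∧ ¬ y ≤ q ∧ mul x y = ⊥ := by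
  obtain ⟨a, ha, haq, hap⟩ :=
    exists_isCompactElement_le_not_le fun hqp => hpq (hp.eq_of_le hq.prop hqp).symm
  obtain ⟨b, hbq, hab⟩ := hL.exists_not_le_mul_eq_bot_of_minimal hred hmc hq ha haq
  exact ⟨a, b, hap, hbq, hab⟩

theorem exists_not_le_forall_le_of_isPrimeElt {p : α} (hp : IsPrimeElt mul p) {ι : Type*}
    (s : Finset ι) (f : ι → α) (hf : ∀ i ∈ s, ¬ f i ≤ p) :
    ∃ z, ¬ z ≤ p ∧ ∀ i ∈ s, z ≤ f i := by
  classical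
  induction s using Finset.induction_on with
  | empty => exact ⟨⊤, fun h => hp.1 (top_le_iff.1 h), by simp⟩
  | insert i s _ ih =>
    obtain ⟨z, hzp, hz⟩ := ih fun j hj => hf j (Finset.mem_insert_of_mem hj)
    refine ⟨mul (f i) z, fun h => (hp.2 _ _ h).elim (hf i (Finset.mem_insert_self i s)) hzp, ?_⟩
    rintro j hj
    rcases Finset.mem_insert.1 hj with rfl | hj
    · exact hL.mul_le_left _ _
    · exact (hL.mul_le_right _ _).trans (hz j hj)

theorem exists_pairwise_mul_eq_bot [IsCompactlyGenerated α] (hred : LatReduced mul)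
    (hmc : ∀ a b : α, IsCompactElement a → IsCompactElement b → IsCompactElement (mul a b))
    (T : Finset α) (hT : ∀ p ∈ T, Minimal (IsPrimeElt mul) p) :
    ∃ c : α → α, (∀ p ∈ T, c p ≠ ⊥) ∧ ∀ p ∈ T, ∀ q ∈ T, p ≠ q → mul (c p) (c q) = ⊥ := by
  classical
  choose! x y hx hy hxy using fun p (hp : p ∈ T) q (hq : q ∈ T) (hpq : p ≠ q) =>
    hL.exists_not_le_not_le_mul_eq_bot hred hmc (hT p hp) (hT q hq) hpq
  -- bounding `c p` by both `x p q` and `y q p` gives `c p · c q ≤ x p q · y p q = 0`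
  choose! c hcp hc using fun p (hp : p ∈ T) =>
    hL.exists_not_le_forall_le_of_isPrimeElt (hT p hp).prop (T.erase p)
      (fun q => mul (x p q) (y q p)) fun q hq h =>
        have hqT := Finset.mem_of_mem_erase hq
        have hqp := Finset.ne_of_mem_erase hq
        ((hT p hp).prop.2 _ _ h).elim (hx p hp q hqT hqp.symm) (hy q hqT p hp hqp)
  refine ⟨c, fun p hp h => hcp p hp (h ▸ bot_le), fun p hp q hq hpq => le_bot_iff.1 ?_⟩
  calc mul (c p) (c q) ≤ mul (x p q) (y p q) := hL.mul_le_mul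
        ((hc p hp q (Finset.mem_erase.2 ⟨hpq.symm, hq⟩)).trans (hL.mul_le_left _ _))
        ((hc q hq p (Finset.mem_erase.2 ⟨hpq, hp⟩)).trans (hL.mul_le_right _ _))
    _ = ⊥ := hxy p hp q hq hpq

theorem card_le_of_pairwise_mul_eq_bot (hred : LatReduced mul) {ι : Type*} {T : Finset ι}
    {c : ι → α} (hc0 : ∀ i ∈ T, c i ≠ ⊥) (hc : ∀ i ∈ T, ∀ j ∈ T, i ≠ j → mul (c i) (c j) = ⊥)
    {N : ℕ} (hN : ∀ s : Finset α, (zdg mul).IsClique ↑s → s.card ≤ N) : T.card ≤ N := by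
  classical
  have hinj : Set.InjOn c T := fun i hi j hj hij => by
    by_contra hne
    exact hc0 i hi (hL.eq_bot_of_mul_self_eq_bot hred (hij ▸ hc i hi j hj hne))
  have hclique : (zdg mul).IsClique ↑(T.image c) := by
    simp only [Finset.coe_image]
    rintro _ ⟨i, hi, rfl⟩ _ ⟨j, hj, rfl⟩ hij
    have hne : i ≠ j := fun h => hij (h ▸ rfl)
    exact ⟨hij, hc0 i hi, hc0 j hj, hc i hi j hj hne, hc j hj i hi hne.symm⟩
  exact (Finset.card_image_of_injOn hinj).symm.trans_le (hN _ hclique)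

theorem finite_setOf_minimal_isPrimeElt [IsCompactlyGenerated α] (hred : LatReduced mul)
    (hmc : ∀ a b : α, IsCompactElement a → IsCompactElement b → IsCompactElement (mul a b))
    (hclique : CliqueBounded mul) : {p | Minimal (IsPrimeElt mul) p}.Finite := by
  obtain ⟨N, hN⟩ := hclique
  by_contra hinf
  obtain ⟨T, hT, hcard⟩ := Set.Infinite.exists_subset_card_eq hinf (N + 1)
  obtain ⟨c, hc0, hc⟩ := hL.exists_pairwise_mul_eq_bot hred hmc T hT
  have := hL.card_le_of_pairwise_mul_eq_bot hred hc0 hc hN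
  omega

end IsMulLattice

theorem bot_eq_finite_meet_of_minimal_primes_general [CompleteLattice α] [IsCompactlyGenerated α]
    (mul : α → α → α) (hL : IsMulLattice mul) (hred : LatReduced mul)
    (hmc : ∀ a b : α, IsCompactElement a →
      IsCompactElement b → IsCompactElement (mul a b))
    (hclique : CliqueBounded mul) :
    ∃ s : Finset α,
      (∀ p ∈ s, IsPrimeElt mul p ∧ ∀ q : α, IsPrimeElt mul q → q ≤ p → q = p) ∧
      s.inf id = ⊥ := by
  have hfin := hL.finite_setOf_minimal_isPrimeElt hred hmc hclique
  refine ⟨hfin.toFinset, fun p hp => ?_, ?_⟩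
  · have hmin : Minimal (IsPrimeElt mul) p := hfin.mem_toFinset.1 hp
    exact ⟨hmin.prop, fun q hq hqp => hmin.eq_of_le hq hqp⟩
  rw [Finset.inf_id_eq_sInf, Set.Finite.coe_toFinset]
  refine le_bot_iff.1 (by_contra fun hne => ?_)
  obtain ⟨c, hc, hcle, hc0⟩ := exists_isCompactElement_le_not_le hne
  obtain ⟨q, hq, hcq⟩ := hL.exists_minimal_isPrimeElt_not_le hred hmc hc fun h => hc0 h.le
  exact hcq (hcle.trans (sInf_le hq))

theorem bot_eq_finite_meet_of_minimal_primes [CompleteLattice α] [IsCompactlyGenerated α]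
    (mul : α → α → α) (hL : IsMulLattice mul) (hred : LatReduced mul)
    (htop : IsCompactElement (⊤ : α))
    (hmc : ∀ a b : α, IsCompactElement a →
      IsCompactElement b → IsCompactElement (mul a b))
    (hclique : CliqueBounded mul) :
    ∃ s : Finset α,
      (∀ p ∈ s, IsPrimeElt mul p ∧ ∀ q : α, IsPrimeElt mul q → q ≤ p → q = p) ∧
      s.inf id = ⊥ :=
  bot_eq_finite_meet_of_minimal_primes_general mul hL hred hmc hclique
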